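/- arXiv:1605.06788 — 2 statements merged into one kernel-verified Lean document; each statement's English description precedes it below -/
import Mathlib

section
/- Let g : ℝ → ℝ be continuous with lim_{t→0⁺} g(t)/t = -a < 0 and lim_{t→+∞} g(t)/t^{p-1} = 1 where p = 2N/(N-2s) > 2, and set G(t) = ∫₀^t g(τ)dτ for t ≥ 0. Then there exists K > 0 such that G(t) ≤ K t^p - (a/4) t² for all t ≥ 0. -/
open Real Filter Set intervalIntegral

theorem primitive_upper_bound (N s a : ℝ) (hs : 0 < s) (hN : 2 * s < N) (ha : 0 < a)
    (p : ℝ) (hp : p = 2 * N / (N - 2 * s)) (hp2 : 2 < p)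
    (g : ℝ → ℝ) (hg : Continuous g)
    (hg0 : Tendsto (fun t => g t / t) (nhdsWithin 0 (Ioi 0)) (nhds (-a)))
    (hginf : Tendsto (fun t => g t / t ^ (p - 1)) atTop (nhds 1))
    (G : ℝ → ℝ) (hG : ∀ t, G t = ∫ τ in (0 : ℝ)..t, g τ) :
    ∃ K > 0, ∀ t ≥ (0 : ℝ), G t ≤ K * t ^ p - a / 4 * t ^ 2 := by
  -- small t bound
  obtain ⟨ε, hε, hδ0⟩ := Metric.mem_nhdsWithin_iff.mp
    (hg0.eventually_lt_const (show -a < -a/2 by linarith))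
  set δ := ε/2 with hδdef
  have hδpos : 0 < δ := by positivity
  have hsmall : ∀ t, 0 < t → t ≤ δ → g t ≤ -(a/2) * t := by
    intro t ht htδ
    have h1 : g t / t < -a/2 := hδ0 ⟨by
        rw [Metric.mem_ball, Real.dist_eq, sub_zero, abs_of_pos ht]
        simp only [hδdef] at htδ; linarith, mem_Ioi.mpr ht⟩
    have h2 := (div_lt_iff₀ ht).mp h1
    nlinarith
  -- large t bound
  obtain ⟨M₀, hM₀⟩ := eventually_atTop.mp (hginf.eventually_lt_const (show (1:ℝ) < 2 by norm_num))
  set M := max M₀ (max δ 1) with hMdef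
  have hδM : δ ≤ M := le_trans (le_max_left _ _) (le_max_right _ _)
  have hM1 : (1:ℝ) ≤ M := le_trans (le_max_right _ _) (le_max_right _ _)
  have hlarge : ∀ t, M ≤ t → g t ≤ 2 * t ^ (p-1) := by
    intro t htM
    have htpos : 0 < t := lt_of_lt_of_le one_pos (hM1.trans htM)
    have hr : 0 < t ^ (p-1) := Real.rpow_pos_of_pos htpos _
    have h1 := hM₀ t (le_trans (le_max_left _ _) htM)
    have h2 := (div_lt_iff₀ hr).mp h1
    linarith
  -- middle bound
  obtain ⟨C₀, hC₀⟩ := isCompact_Icc.exists_bound_of_continuousOn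
    (hg.continuousOn (s := Icc δ M))
  have hδp1 : 0 < δ ^ (p-1) := Real.rpow_pos_of_pos hδpos _
  set C₁ := max C₀ 0 / δ ^ (p-1) with hC₁def
  have hC₁nn : 0 ≤ C₁ := div_nonneg (le_max_right _ _) hδp1.le
  have hmid : ∀ t, δ ≤ t → t ≤ M → g t ≤ C₁ * t ^ (p-1) := by
    intro t h1 h2
    have htp : δ ^ (p-1) ≤ t ^ (p-1) := Real.rpow_le_rpow hδpos.le h1 (by linarith)
    have hb : g t ≤ max C₀ 0 := by
      have := hC₀ t ⟨h1, h2⟩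
      rw [Real.norm_eq_abs] at this
      have := le_trans (le_abs_self _) this
      exact le_trans this (le_max_left _ _)
    calc g t ≤ max C₀ 0 := hb
      _ = C₁ * δ ^ (p-1) := by rw [hC₁def, div_mul_cancel₀ _ (ne_of_gt hδp1)]
      _ ≤ C₁ * t ^ (p-1) := mul_le_mul_of_nonneg_left htp hC₁nn
  -- g 0 = 0
  have hg00 : g 0 = 0 := by
    have h1 : Tendsto g (nhdsWithin 0 (Ioi 0)) (nhds (g 0)) :=
      (hg.tendsto 0).mono_left nhdsWithin_le_nhds
    have h2 : Tendsto (fun t => g t / t * t) (nhdsWithin 0 (Ioi 0)) (nhds (-a * 0)) :=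
      hg0.mul ((continuous_id.tendsto 0).mono_left nhdsWithin_le_nhds)
    have heq : (fun t => g t / t * t) =ᶠ[nhdsWithin 0 (Ioi 0)] g := by
      filter_upwards [self_mem_nhdsWithin] with t ht
      exact div_mul_cancel₀ _ (ne_of_gt ht)
    have h3 : Tendsto g (nhdsWithin 0 (Ioi 0)) (nhds (-a * 0)) := h2.congr' heq
    have := tendsto_nhds_unique h1 h3
    simpa using this
  -- constants
  have hδ2p : 0 < δ ^ (2-p) := Real.rpow_pos_of_pos hδpos _
  set B := a/2 * δ ^ (2-p) with hBdef
  have hB : 0 < B := mul_pos (by linarith) hδ2p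
  set C' := C₁ + 3 + B with hC'def
  have hC'pos : 0 < C' := by linarith
  -- key pointwise bound
  have key : ∀ t, 0 ≤ t → g t ≤ C' * t ^ (p-1) - a/2 * t := by
    intro t ht
    rcases eq_or_lt_of_le ht with h0 | h0
    · rw [← h0]
      simp [hg00, Real.zero_rpow (show p - 1 ≠ 0 by linarith)]
    have hA : 0 ≤ t ^ (p-1) := Real.rpow_nonneg ht _
    rcases le_or_gt t δ with h1 | h1
    · have hs1 := hsmall t h0 h1
      have hnn : 0 ≤ C' * t ^ (p-1) := mul_nonneg hC'pos.le hA
      nlinarith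
    · have htδ : δ ≤ t := h1.le
      have ht2p : t ^ (2-p) ≤ δ ^ (2-p) :=
        Real.rpow_le_rpow_of_nonpos hδpos htδ (by linarith)
      have hts : t ^ (p-1) * t ^ (2-p) = t := by
        rw [← Real.rpow_add h0, show p-1+(2-p) = 1 by ring, Real.rpow_one]
      have habc : a/2 * t ≤ B * t ^ (p-1) := by
        calc a/2 * t = a/2 * (t ^ (p-1) * t ^ (2-p)) := by rw [hts]
          _ ≤ a/2 * (t ^ (p-1) * δ ^ (2-p)) := by
              apply mul_le_mul_of_nonneg_left _ (by linarith : (0:ℝ) ≤ a/2)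
              exact mul_le_mul_of_nonneg_left ht2p hA
          _ = B * t ^ (p-1) := by rw [hBdef]; ring
      have hexp : C' * t ^ (p-1) = C₁ * t ^ (p-1) + 3 * t ^ (p-1) + B * t ^ (p-1) := by
        rw [hC'def]; ring
      rcases le_or_gt t M with h2 | h2
      · have hm := hmid t htδ h2
        linarith
      · have hl := hlarge t h2.le
        nlinarith
  -- integrate
  refine ⟨C'/p, div_pos hC'pos (by linarith), ?_⟩
  intro t ht
  rw [hG t]
  have hrpow : IntervalIntegrable (fun τ : ℝ => τ ^ (p-1)) MeasureTheory.volume 0 t :=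
    intervalIntegral.intervalIntegrable_rpow (Or.inl (by linarith))
  have hid : IntervalIntegrable (fun τ : ℝ => a/2 * τ) MeasureTheory.volume 0 t :=
    (intervalIntegrable_id (μ := MeasureTheory.volume)).const_mul (a/2)
  have hint2 : IntervalIntegrable (fun τ : ℝ => C' * τ ^ (p-1) - a/2 * τ) MeasureTheory.volume 0 t :=
    (hrpow.const_mul C').sub hid
  have hmono : (∫ τ in (0:ℝ)..t, g τ) ≤ ∫ τ in (0:ℝ)..t, (C' * τ ^ (p-1) - a/2 * τ) :=
    intervalIntegral.integral_mono_on ht (hg.intervalIntegrable _ _) hint2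
      (fun x hx => key x hx.1)
  have hcalc : (∫ τ in (0:ℝ)..t, (C' * τ ^ (p-1) - a/2 * τ)) = C'/p * t ^ p - a/4 * t ^ 2 := by
    rw [intervalIntegral.integral_sub (hrpow.const_mul C') hid,
        intervalIntegral.integral_const_mul, intervalIntegral.integral_const_mul,
        integral_id, integral_rpow (Or.inl (by linarith : (-1:ℝ) < p - 1)),
        Real.zero_rpow (by linarith : p - 1 + 1 ≠ 0),
        show p - 1 + 1 = p by ring]
    have hpne : p ≠ 0 := by linarith
    field_simp
    ring
  linarith [hmono, hcalc]
end

section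
/- Let N > 2s > 0 and let M, τ, ν, and sequences τ_n, ν_n be reals with θ = (N-2s)/N, satisfying: τ_n → M - τ, ν_n → 1 - ν, 0 ≤ τ ≤ M, τ ≥ M·ν^θ whenever ν ≥ 0, τ_n ≥ M·ν_n^θ whenever ν_n ≥ 0, and M > 0. Then ν ≤ 1, and if additionally ν ≥ 0 and ν < 1 then ν must equal 0. -/
open Filter

theorem splitting_dichotomy (N s : ℝ) (hs : 0 < s) (hN : 2 * s < N)
    (M τ ν : ℝ) (τn νn : ℕ → ℝ)
    (hτn : Tendsto τn atTop (nhds (M - τ))) (hνn : Tendsto νn atTop (nhds (1 - ν)))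
    (hτ0 : 0 ≤ τ) (hτM : τ ≤ M)
    (hτν : 0 ≤ ν → τ ≥ M * ν ^ ((N - 2 * s) / N))
    (hτνn : ∀ n, 0 ≤ νn n → τn n ≥ M * νn n ^ ((N - 2 * s) / N))
    (hMpos : 0 < M) :
    ν ≤ 1 ∧ (0 ≤ ν → ν < 1 → ν = 0) := by
  set θ : ℝ := (N - 2 * s) / N with hθdef
  have hNpos : 0 < N := by linarith
  have hθpos : 0 < θ := by
    rw [hθdef]; apply div_pos <;> linarith
  have hθlt : θ < 1 := by
    rw [hθdef, div_lt_one hNpos]; linarith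
  -- key fact: for 0 < x < 1, x < x ^ θ
  have key : ∀ x : ℝ, 0 < x → x < 1 → x < x ^ θ := by
    intro x hx hx1
    have := Real.rpow_lt_rpow_of_exponent_gt hx hx1 hθlt
    rwa [Real.rpow_one] at this
  have hν1 : ν ≤ 1 := by
    by_contra h
    push_neg at h
    have hν0 : (0:ℝ) ≤ ν := by linarith
    have h1 : (1:ℝ) < ν ^ θ := by
      exact (Real.one_lt_rpow_iff_of_pos (by linarith : (0:ℝ) < ν)).mpr (Or.inl ⟨h, hθpos⟩)
    have := hτν hν0
    nlinarith
  refine ⟨hν1, fun hν0 hνlt1 => ?_⟩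
  by_contra hne
  have hνpos : 0 < ν := lt_of_le_of_ne hν0 (Ne.symm hne)
  have h1ν : 0 < 1 - ν := by linarith
  -- eventually νn n > 0
  have hev : ∀ᶠ n in atTop, 0 < νn n := hνn.eventually (eventually_gt_nhds h1ν)
  -- limit of M * νn ^ θ is M * (1-ν)^θ
  have hlim : Tendsto (fun n => M * νn n ^ θ) atTop (nhds (M * (1 - ν) ^ θ)) :=
    Tendsto.const_mul M (hνn.rpow_const (Or.inr hθpos.le))
  have hineq : M * (1 - ν) ^ θ ≤ M - τ := by
    refine le_of_tendsto_of_tendsto hlim hτn ?_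
    filter_upwards [hev] with n hn
    exact hτνn n hn.le
  have hineq2 : M * ν ^ θ ≤ τ := hτν hν0
  have k1 : ν < ν ^ θ := key ν hνpos hνlt1
  have k2 : 1 - ν < (1 - ν) ^ θ := key (1 - ν) h1ν (by linarith)
  nlinarith [mul_lt_mul_of_pos_left k1 hMpos, mul_lt_mul_of_pos_left k2 hMpos]
end
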